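/- arXiv:0806.3906 — 3 statements merged into one kernel-verified Lean document; each statement's English description precedes it below -/
import Mathlib

section
/- Let W be a finite set of n voters and let 𝔊 be a collection of subsets of W (the winning coalitions) that is monotone (if A ∈ 𝔊 and A ⊆ B ⊆ W then B ∈ 𝔊), with W ∈ 𝔊 and ∅ ∉ 𝔊. Let {V₁, …, V_m} be an enumeration of the set of minimal winning coalitions of 𝔊 (the minimal elements of 𝔊 with respect to inclusion). Then for every voter w ∈ W, the Banzhaf score BS_w = #{C ∈ 𝔊 : w ∈ C and C \ {w} ∉ 𝔊} satisfies BS_w = Σ_{r=1}^{m} (−1)^{r−1} Σ_{1 ≤ i₁ < … < i_r ≤ m} t_{i₁,…,i_r}(w), where t_{i₁,…,i_r}(w) = 2^{n − #(V_{i₁} ∪ … ∪ V_{i_r})} if w ∈ V_{i₁} ∪ … ∪ V_{i_r}, and t_{i₁,…,i_r}(w) = 0 otherwise. -/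
/-!
A coalition is winning iff it contains a minimal winning coalition, so `𝔊` is the union of the
up-sets `{C | Vᵢ ⊆ C}`, and `{C | C \ {w} ∈ 𝔊}` is the union of those with `w ∉ Vᵢ`. The Banzhaf
score is the difference of the sizes of these two unions, since a coalition `C` with
`C \ {w} ∈ 𝔊` is itself winning. Counting both unions by inclusion–exclusion, an intersection of
up-sets is the up-set of `V_{i₁} ∪ ⋯ ∪ V_{i_r}`, of size `2 ^ (n - #(V_{i₁} ∪ ⋯ ∪ V_{i_r}))`; the
terms with `w ∉ V_{i₁} ∪ ⋯ ∪ V_{i_r}` occur in both sums and cancel.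
-/

open Finset

section
variable {ι κ : Type*} [DecidableEq ι] {G : Finset (Finset ι)} {s : Finset κ} {V : κ → Finset ι}

lemma exists_subset_of_mem_of_minimal
    (hmin : ∀ A ∈ G, (∀ v ∈ A, A.erase v ∉ G) → ∃ i ∈ s, V i = A) {C : Finset ι} (hC : C ∈ G) :
    ∃ i ∈ s, V i ⊆ C := by
  obtain ⟨A, hAC, hA⟩ := exists_minimal_le_of_wellFoundedLT (· ∈ G) C hC
  obtain ⟨i, hi, rfl⟩ := hmin A hA.prop fun v hv hvG => by
    simpa using hA.le_of_le hvG (erase_subset v A) hv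
  exact ⟨i, hi, hAC⟩

variable [Fintype ι]

lemma eq_filter_exists_subset
    (hmono : ∀ A ∈ G, ∀ B : Finset ι, A ⊆ B → B ∈ G) (hV : ∀ i ∈ s, V i ∈ G)
    (hmin : ∀ A ∈ G, (∀ v ∈ A, A.erase v ∉ G) → ∃ i ∈ s, V i = A) :
    G = univ.filter fun C => ∃ i ∈ s, V i ⊆ C := by
  ext C
  rw [mem_filter_univ]
  exact ⟨exists_subset_of_mem_of_minimal hmin, fun ⟨i, hi, hiC⟩ => hmono _ (hV i hi) C hiC⟩

lemma card_filter_mem_and_erase_notMem_eq_sub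
    (hmono : ∀ A ∈ G, ∀ B : Finset ι, A ⊆ B → B ∈ G) (w : ι) :
    (#(G.filter fun C => w ∈ C ∧ C.erase w ∉ G) : ℤ) = #G - #{C : Finset ι | C.erase w ∈ G} := by
  have hsub : ({C | C.erase w ∈ G} : Finset (Finset ι)) ⊆ G := fun C hC =>
    hmono _ (mem_filter.mp hC).2 C (erase_subset w C)
  rw [← Nat.cast_sub (card_le_card hsub), ← card_sdiff_of_subset hsub]
  congr 2
  ext C
  by_cases hw : w ∈ C <;> simp [hw, erase_eq_of_notMem]

end

section
variable {ι κ : Type*} [Fintype ι] [DecidableEq ι]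

lemma card_Ici_finset (D : Finset ι) : #(Ici D) = 2 ^ (Fintype.card ι - #D) := by
  rw [← Icc_top, top_eq_univ, card_Icc_finset (subset_univ D), card_univ]

lemma card_filter_exists_subset (s : Finset κ) (D : κ → Finset ι) :
    (#{C : Finset ι | ∃ i ∈ s, D i ⊆ C} : ℤ) =
      ∑ t ∈ s.powerset with t.Nonempty,
        (-1) ^ (#t + 1) * 2 ^ (Fintype.card ι - #(t.biUnion D)) := by
  have hunion : ({C | ∃ i ∈ s, D i ⊆ C} : Finset (Finset ι)) = s.biUnion (Ici ∘ D) := by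
    ext C; simp
  have hinter (t : Finset κ) (ht : t.Nonempty) : t.inf' ht (Ici ∘ D) = Ici (t.biUnion D) := by
    ext C; simp
  rw [hunion, inclusion_exclusion_card_biUnion]
  simp only [hinter, card_Ici_finset, Nat.cast_pow, Nat.cast_ofNat]
  exact sum_coe_sort _ fun t => (-1 : ℤ) ^ (#t + 1) * 2 ^ (Fintype.card ι - #(t.biUnion D))

lemma card_filter_exists_subset_sub_card_filter_exists_subset_erase
    (s : Finset κ) (D : κ → Finset ι) (w : ι) :
    (#{C : Finset ι | ∃ i ∈ s, D i ⊆ C} : ℤ) - #{C : Finset ι | ∃ i ∈ s, D i ⊆ C.erase w} =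
      ∑ t ∈ s.powerset, (-1) ^ (#t + 1) *
        if w ∈ t.biUnion D then 2 ^ (Fintype.card ι - #(t.biUnion D)) else 0 := by
  have herase : #{C : Finset ι | ∃ i ∈ s, D i ⊆ C.erase w} =
      #{C : Finset ι | ∃ i ∈ s.filter (w ∉ D ·), D i ⊆ C} := by
    congr 1; ext C; simp [subset_erase, and_assoc, and_comm]
  have hpowerset : (s.filter (w ∉ D ·)).powerset = s.powerset.filter (w ∉ ·.biUnion D) := by
    ext t; simp only [mem_powerset, mem_filter, mem_biUnion, subset_iff]; grind
  have hmem : (s.powerset.filter (·.Nonempty)).filter (w ∈ ·.biUnion D) =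
      s.powerset.filter (w ∈ ·.biUnion D) := by
    ext t; simp only [mem_filter, mem_biUnion]; grind
  have hnotMem : (s.powerset.filter (·.Nonempty)).filter (w ∉ ·.biUnion D) =
      (s.filter (w ∉ D ·)).powerset.filter (·.Nonempty) := by
    rw [hpowerset, filter_filter, filter_filter]; grind
  simp only [mul_ite, mul_zero]
  rw [herase, card_filter_exists_subset, card_filter_exists_subset, ← sum_filter,
    ← sum_filter_add_sum_filter_not _ (w ∈ ·.biUnion D), hmem, hnotMem, add_sub_cancel_right]

end

lemma sum_powerset_neg_one_pow_mul_eq_sum_Icc {α R : Type*} [CommRing R] (s : Finset α)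
    (f : Finset α → R) (hf : f ∅ = 0) :
    ∑ t ∈ s.powerset, (-1) ^ (#t + 1) * f t =
      ∑ r ∈ Icc 1 #s, (-1) ^ (r - 1) * ∑ t ∈ powersetCard r s, f t := by
  rw [sum_powerset, sum_range_eq_add_Ico _ (Nat.zero_lt_succ #s), Nat.succ_eq_add_one,
    Ico_add_one_right_eq_Icc]
  simp only [powersetCard_zero, sum_singleton, hf, mul_zero, zero_add, mul_sum]
  refine sum_congr rfl fun r hr => sum_congr rfl fun t ht => ?_
  obtain ⟨k, rfl⟩ := Nat.exists_eq_add_of_le' (mem_Icc.mp hr).1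
  rw [(mem_powersetCard.mp ht).2, Nat.add_sub_cancel]
  ring

theorem banzhaf_score_direct_calculation_general
    {ι : Type*} [Fintype ι] [DecidableEq ι]
    (G : Finset (Finset ι))
    (hmono : ∀ A ∈ G, ∀ B : Finset ι, A ⊆ B → B ∈ G)
    (m : ℕ) (V : Fin m → Finset ι)
    (hVenum : ∀ A : Finset ι,
      (∃ i : Fin m, V i = A) ↔ (A ∈ G ∧ ∀ v ∈ A, A.erase v ∉ G))
    (w : ι) :
    ((G.filter (fun C => w ∈ C ∧ C.erase w ∉ G)).card : ℤ) =
      ∑ r ∈ Finset.Icc 1 m, (-1 : ℤ) ^ (r - 1) *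
        ∑ I ∈ Finset.powersetCard r (Finset.univ : Finset (Fin m)),
          (if w ∈ I.biUnion V
            then (2 : ℤ) ^ (Fintype.card ι - (I.biUnion V).card)
            else 0) := by
  have hV (i : Fin m) (_ : i ∈ univ) : V i ∈ G := ((hVenum _).mp ⟨i, rfl⟩).1
  have hmin (A : Finset ι) (hA : A ∈ G) (hAmin : ∀ v ∈ A, A.erase v ∉ G) : ∃ i ∈ univ, V i = A :=
    let ⟨i, hi⟩ := (hVenum A).mpr ⟨hA, hAmin⟩; ⟨i, mem_univ i, hi⟩
  have hIE := card_filter_exists_subset_sub_card_filter_exists_subset_erase univ V w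
  rw [sum_powerset_neg_one_pow_mul_eq_sum_Icc _ _ (by simp), card_univ, Fintype.card_fin] at hIE
  rw [card_filter_mem_and_erase_notMem_eq_sub hmono, eq_filter_exists_subset hmono hV hmin]
  simpa using hIE

/-- **Theorem 1 (BS-direct-calculation formula).**
In a voting system `(W, 𝔊)` (here `W` is the finite type `ι`, and `G` is the
monotone family of winning coalitions with `W ∈ G`, `∅ ∉ G`), let
`V 1, …, V m` be an enumeration of the minimal winning coalitions. Then the
Banzhaf score `BS_w = #{C ∈ G | w ∈ C, C \ {w} ∉ G}` of any voter `w` equals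
`∑_{r=1}^m (−1)^{r−1} ∑_{1 ≤ i₁ < ⋯ < i_r ≤ m} t_{i₁,…,i_r}(w)`, where
`t_{i₁,…,i_r}(w) = 2^{n − #(V_{i₁} ∪ ⋯ ∪ V_{i_r})}` if
`w ∈ V_{i₁} ∪ ⋯ ∪ V_{i_r}` and `0` otherwise. -/
theorem banzhaf_score_direct_calculation
    {ι : Type*} [Fintype ι] [DecidableEq ι] [Nonempty ι]
    (G : Finset (Finset ι))
    (hmono : ∀ A ∈ G, ∀ B : Finset ι, A ⊆ B → B ∈ G)
    (htop : (Finset.univ : Finset ι) ∈ G)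
    (hbot : (∅ : Finset ι) ∉ G)
    (m : ℕ) (V : Fin m → Finset ι)
    (hVinj : Function.Injective V)
    (hVenum : ∀ A : Finset ι,
      (∃ i : Fin m, V i = A) ↔ (A ∈ G ∧ ∀ v ∈ A, A.erase v ∉ G))
    (w : ι) :
    ((G.filter (fun C => w ∈ C ∧ C.erase w ∉ G)).card : ℤ) =
      ∑ r ∈ Finset.Icc 1 m, (-1 : ℤ) ^ (r - 1) *
        ∑ I ∈ Finset.powersetCard r (Finset.univ : Finset (Fin m)),
          (if w ∈ I.biUnion V
            then (2 : ℤ) ^ (Fintype.card ι - (I.biUnion V).card)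
            else 0) :=
  banzhaf_score_direct_calculation_general G hmono m V hVenum w
end

section
/- Let W be a finite set of n voters and let 𝔊 be a collection of subsets of W that is monotone, with W ∈ 𝔊 and ∅ ∉ 𝔊. Let {V₁, …, V_m} be an enumeration of the set of minimal winning coalitions of 𝔊. Then for every voter w ∈ W, the Shapley–Shubik index SSI_w = Σ_{S ∈ 𝔊, w decisive for S} (n − #S)! (#S − 1)! / n! (as a rational number) satisfies SSI_w = Σ_{r=1}^{m} (−1)^{r−1} Σ_{1 ≤ i₁ < … < i_r ≤ m} s_{i₁,…,i_r}(w), where s_{i₁,…,i_r}(w) = 1 / #(V_{i₁} ∪ … ∪ V_{i_r}) if w ∈ V_{i₁} ∪ … ∪ V_{i_r}, and s_{i₁,…,i_r}(w) = 0 otherwise. -/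
/-!
The Shapley–Shubik index of `w` is the Shapley value of `w` in the simple game `𝟙_𝔊`, and the
Shapley value is linear in the game. Since a coalition wins iff it contains some `Vᵢ`,
inclusion–exclusion writes `𝟙_𝔊 = ∑_{I ≠ ∅} (-1)^(#I+1) u_{V_I}`, where `u_U` is the unanimity
game of `U` (a coalition wins iff it contains `U`) and `V_I = ⋃_{i ∈ I} Vᵢ`. In `u_U` the voter `w`
is decisive exactly in the supersets of `U` when `w ∈ U`, and by the hockey-stick identity the
Shapley weights of these supersets add up to `1/#U`.
-/

open Finset

section

open Nat

def shapleyWeight (n s : ℕ) : ℚ := ((n - s)! * (s - 1)! : ℚ) / n !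

lemma choose_mul_shapleyWeight {a N k : ℕ} (hk : k ≤ N) :
    (N.choose k : ℚ) * shapleyWeight (a + 1 + N) (a + 1 + k) =
      (k + a).choose a * (N ! * a ! / (a + 1 + N)!) := by
  have hN : (N.choose k : ℚ) * k ! * (N - k)! = N ! := by
    exact_mod_cast Nat.choose_mul_factorial_mul_factorial hk
  have ha : ((k + a).choose a : ℚ) * k ! * a ! = (k + a)! := by
    exact_mod_cast Nat.add_choose_mul_factorial_mul_factorial k a
  rw [shapleyWeight, show a + 1 + N - (a + 1 + k) = N - k by omega,
    show a + 1 + k - 1 = k + a by omega, ← hN, ← ha]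
  field_simp

lemma sum_choose_mul_shapleyWeight (a N : ℕ) :
    ∑ k ∈ range (N + 1), (N.choose k : ℚ) * shapleyWeight (a + 1 + N) (a + 1 + k) =
      1 / (a + 1) := by
  rw [sum_congr rfl fun k hk => choose_mul_shapleyWeight (Nat.lt_succ_iff.mp (mem_range.mp hk)),
    ← sum_mul]
  have hsum : ∑ k ∈ range (N + 1), ((k + a).choose a : ℚ) = (N + a + 1).choose (a + 1) := by
    exact_mod_cast Nat.sum_range_add_choose N a
  have hchoose : ((N + a + 1).choose (a + 1) : ℚ) * N ! * (a + 1)! = (N + a + 1)! := by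
    exact_mod_cast Nat.add_choose_mul_factorial_mul_factorial N (a + 1)
  rw [hsum, show a + 1 + N = N + a + 1 by ring, ← hchoose, Nat.factorial_succ]
  have hpos : ((N + a + 1).choose (a + 1) : ℚ) ≠ 0 := by
    exact_mod_cast (Nat.choose_pos (by omega)).ne'
  push_cast
  field_simp

end

section

variable {ι : Type*} [DecidableEq ι]

def unanimityGame (U : Finset ι) (S : Finset ι) : ℚ := if U ⊆ S then 1 else 0

def simpleGame (G : Finset (Finset ι)) (S : Finset ι) : ℚ := if S ∈ G then 1 else 0

lemma unanimityGame_sub_unanimityGame_erase (U S : Finset ι) (w : ι) :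
    unanimityGame U S - unanimityGame U (S.erase w) = if w ∈ U ∧ U ⊆ S then 1 else 0 := by
  by_cases hw : w ∈ U <;> simp [unanimityGame, subset_erase, hw]

lemma mem_iff_exists_minimal_subset {κ : Type*} {G : Finset (Finset ι)}
    (hmono : ∀ A ∈ G, ∀ B : Finset ι, A ⊆ B → B ∈ G) {V : κ → Finset ι}
    (hV : ∀ A : Finset ι, (∃ i, V i = A) ↔ (A ∈ G ∧ ∀ v ∈ A, A.erase v ∉ G)) (S : Finset ι) :
    S ∈ G ↔ ∃ i, V i ⊆ S := by
  refine ⟨fun hS => ?_, fun ⟨i, hi⟩ => hmono _ ((hV _).mp ⟨i, rfl⟩).1 _ hi⟩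
  obtain ⟨A, hAS, hA⟩ := exists_minimal_le_of_wellFoundedLT (· ∈ G) S hS
  have hAmin : ∀ v ∈ A, A.erase v ∉ G := fun v hv hvA =>
    not_subset_of_ssubset (erase_ssubset hv) (hA.le_of_le hvA (erase_subset v A))
  obtain ⟨i, rfl⟩ := (hV A).mpr ⟨hA.prop, hAmin⟩
  exact ⟨i, hAS⟩

lemma simpleGame_eq_sum_unanimityGame {κ : Type*} [Fintype κ] {G : Finset (Finset ι)}
    {V : κ → Finset ι} (hG : ∀ S, S ∈ G ↔ ∃ i, V i ⊆ S) :
    simpleGame G =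
      ∑ t ∈ univ.powerset with t.Nonempty, (-1 : ℤ) ^ (#t + 1) • unanimityGame (t.biUnion V) := by
  classical
  ext S
  have hunion : S ∈ ⋃ i ∈ (univ : Finset κ), Set.Ici (V i) ↔ S ∈ G := by simp [hG]
  have hinter (t : Finset κ) : S ∈ ⋂ i ∈ t, Set.Ici (V i) ↔ t.biUnion V ⊆ S := by simp
  have hIE := indicator_biUnion_eq_sum_powerset univ (fun i => Set.Ici (V i)) (1 : Finset ι → ℚ) S
  simp only [Set.indicator_apply, hunion, hinter, Pi.one_apply] at hIE
  simpa [simpleGame, unanimityGame] using hIE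

variable [Fintype ι]

lemma sum_shapleyWeight_Icc_univ {U : Finset ι} (hU : U.Nonempty) :
    ∑ S ∈ Icc U univ, shapleyWeight (Fintype.card ι) #S = 1 / (#U : ℚ) := by
  have hdisj {T : Finset ι} (hT : T ∈ (univ \ U).powerset) : Disjoint U T :=
    disjoint_sdiff.mono_right (mem_powerset.mp hT)
  have hinj : Set.InjOn (U ∪ ·) (univ \ U).powerset := fun T₁ h₁ T₂ h₂ h => by
    rw [← union_sdiff_cancel_left (hdisj h₁), ← union_sdiff_cancel_left (hdisj h₂)]
    exact congrArg (· \ U) h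
  rw [Icc_eq_image_powerset (subset_univ U), sum_image hinj,
    sum_congr rfl fun T hT => by rw [card_union_of_disjoint (hdisj hT)],
    sum_powerset_apply_card (fun t => shapleyWeight _ (#U + t)), card_univ_sdiff]
  obtain ⟨a, ha⟩ : ∃ a, #U = a + 1 := Nat.exists_eq_succ_of_ne_zero (card_ne_zero.mpr hU)
  obtain ⟨N, hN⟩ : ∃ N, Fintype.card ι = #U + N := Nat.exists_eq_add_of_le (card_le_univ U)
  rw [hN, Nat.add_sub_cancel_left, ha]
  simp only [nsmul_eq_mul]
  exact_mod_cast sum_choose_mul_shapleyWeight a N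

/-- Coalitions `S ∌ w` contribute nothing, since then `S.erase w = S`. -/
def shapleyValue (w : ι) : (Finset ι → ℚ) →ₗ[ℚ] ℚ :=
  ∑ S, shapleyWeight (Fintype.card ι) #S •
    (LinearMap.proj (R := ℚ) (φ := fun _ => ℚ) S - LinearMap.proj (S.erase w))

lemma shapleyValue_apply (w : ι) (v : Finset ι → ℚ) :
    shapleyValue w v = ∑ S, shapleyWeight (Fintype.card ι) #S * (v S - v (S.erase w)) := by
  simp [shapleyValue]

lemma shapleyValue_unanimityGame (w : ι) (U : Finset ι) :
    shapleyValue w (unanimityGame U) = if w ∈ U then 1 / (#U : ℚ) else 0 := by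
  simp_rw [shapleyValue_apply, unanimityGame_sub_unanimityGame_erase, mul_ite, mul_one, mul_zero,
    ← sum_filter]
  split_ifs with hw
  · rw [← sum_shapleyWeight_Icc_univ ⟨w, hw⟩, Icc_eq_filter_powerset, powerset_univ]
    simp [hw]
  · simp [hw]

lemma shapleyValue_simpleGame {G : Finset (Finset ι)}
    (hmono : ∀ A ∈ G, ∀ B : Finset ι, A ⊆ B → B ∈ G) (w : ι) :
    shapleyValue w (simpleGame G) =
      ∑ S ∈ G with w ∈ S ∧ S.erase w ∉ G, shapleyWeight (Fintype.card ι) #S := by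
  have hdecisive (S : Finset ι) : simpleGame G S - simpleGame G (S.erase w) =
      if S ∈ G ∧ w ∈ S ∧ S.erase w ∉ G then 1 else 0 := by
    by_cases hwS : w ∈ S
    · by_cases h : S.erase w ∈ G
      · simp [simpleGame, h, hmono _ h S (erase_subset w S)]
      · simp [simpleGame, h, hwS]
    · simp [simpleGame, hwS]
  simp_rw [shapleyValue_apply, hdecisive, mul_ite, mul_one, mul_zero]
  rw [← sum_filter]
  congr 1
  ext S
  simp

end

lemma sum_powerset_filter_nonempty {α M : Type*} [AddCommMonoid M] (s : Finset α)
    (f : Finset α → M) :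
    ∑ t ∈ s.powerset with t.Nonempty, f t = ∑ r ∈ Icc 1 #s, ∑ t ∈ powersetCard r s, f t := by
  have hrange : range (#s + 1) = insert 0 (Icc 1 #s) := by
    ext r
    simp only [mem_range, mem_insert, mem_Icc]
    omega
  rw [sum_filter, sum_powerset, hrange, sum_insert (by simp), powersetCard_zero, sum_singleton,
    if_neg Finset.not_nonempty_empty, zero_add]
  refine sum_congr rfl fun r hr => sum_congr rfl fun t ht => if_pos ?_
  rw [← card_pos, (mem_powersetCard.mp ht).2]
  exact (mem_Icc.mp hr).1

theorem shapley_shubik_direct_calculation_general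
    {ι : Type*} [Fintype ι] [DecidableEq ι]
    (G : Finset (Finset ι))
    (hmono : ∀ A ∈ G, ∀ B : Finset ι, A ⊆ B → B ∈ G)
    (m : ℕ) (V : Fin m → Finset ι)
    (hVenum : ∀ A : Finset ι,
      (∃ i : Fin m, V i = A) ↔ (A ∈ G ∧ ∀ v ∈ A, A.erase v ∉ G))
    (w : ι) :
    (∑ S ∈ G.filter (fun S => w ∈ S ∧ S.erase w ∉ G),
        ((Nat.factorial (Fintype.card ι - S.card) *
          Nat.factorial (S.card - 1) : ℚ) /
          Nat.factorial (Fintype.card ι))) =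
      ∑ r ∈ Finset.Icc 1 m, (-1 : ℚ) ^ (r - 1) *
        ∑ I ∈ Finset.powersetCard r (Finset.univ : Finset (Fin m)),
          (if w ∈ I.biUnion V
            then (1 : ℚ) / (I.biUnion V).card
            else 0) := by
  refine (shapleyValue_simpleGame hmono w).symm.trans ?_
  rw [simpleGame_eq_sum_unanimityGame (mem_iff_exists_minimal_subset hmono hVenum), map_sum,
    sum_powerset_filter_nonempty, card_univ, Fintype.card_fin]
  refine sum_congr rfl fun r hr => ?_
  obtain ⟨k, rfl⟩ : ∃ k, r = k + 1 := Nat.exists_eq_add_of_le' (mem_Icc.mp hr).1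
  rw [mul_sum]
  refine sum_congr rfl fun I hI => ?_
  rw [map_zsmul, shapleyValue_unanimityGame, (mem_powersetCard.mp hI).2, zsmul_eq_mul]
  push_cast
  ring

/-- **Theorem 2 (SSI-direct-calculation formula).**
In a voting system `(W, 𝔊)` with minimal winning coalitions `V 1, …, V m`,
the Shapley–Shubik index
`SSI_w = ∑_{S ∈ 𝔊, w decisive for S} (n − #S)!(#S − 1)!/n!` of any voter `w`
equals `∑_{r=1}^m (−1)^{r−1} ∑_{1 ≤ i₁ < ⋯ < i_r ≤ m} s_{i₁,…,i_r}(w)`,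
where `s_{i₁,…,i_r}(w) = 1/#(V_{i₁} ∪ ⋯ ∪ V_{i_r})` if
`w ∈ V_{i₁} ∪ ⋯ ∪ V_{i_r}` and `0` otherwise. -/
theorem shapley_shubik_direct_calculation
    {ι : Type*} [Fintype ι] [DecidableEq ι] [Nonempty ι]
    (G : Finset (Finset ι))
    (hmono : ∀ A ∈ G, ∀ B : Finset ι, A ⊆ B → B ∈ G)
    (htop : (Finset.univ : Finset ι) ∈ G)
    (hbot : (∅ : Finset ι) ∉ G)
    (m : ℕ) (V : Fin m → Finset ι)
    (hVinj : Function.Injective V)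
    (hVenum : ∀ A : Finset ι,
      (∃ i : Fin m, V i = A) ↔ (A ∈ G ∧ ∀ v ∈ A, A.erase v ∉ G))
    (w : ι) :
    (∑ S ∈ G.filter (fun S => w ∈ S ∧ S.erase w ∉ G),
        ((Nat.factorial (Fintype.card ι - S.card) *
          Nat.factorial (S.card - 1) : ℚ) /
          Nat.factorial (Fintype.card ι))) =
      ∑ r ∈ Finset.Icc 1 m, (-1 : ℚ) ^ (r - 1) *
        ∑ I ∈ Finset.powersetCard r (Finset.univ : Finset (Fin m)),
          (if w ∈ I.biUnion V
            then (1 : ℚ) / (I.biUnion V).card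
            else 0) :=
  shapley_shubik_direct_calculation_general G hmono m V hVenum w
end

section
/- Let W be a finite set with #W = n and let A be a non-empty subset of W with #A = k. Then the sum, over all subsets C of W with A ⊆ C, of the rational numbers (n − #C)! (#C − 1)! / n! equals 1/k. Equivalently, Σ_{C : A ⊆ C ⊆ W} (n − #C)!(#C − 1)!/n! = 1/#A. -/
open Finset Nat

lemma psi_term_eq (k m j : ℕ) (hj : j ≤ m) :
    m.choose j * ((m - j).factorial * (k + j).factorial) =
      m.factorial * (k.factorial * (k + j).choose k) := by
  apply Nat.eq_of_mul_eq_mul_right (Nat.factorial_pos j)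
  have h1 : m.choose j * j.factorial * (m - j).factorial = m.factorial :=
    Nat.choose_mul_factorial_mul_factorial hj
  have h2 : (k + j).choose k * k.factorial * j.factorial = (k + j).factorial := by
    have := Nat.choose_mul_factorial_mul_factorial (Nat.le_add_right k j)
    simpa using this
  calc m.choose j * ((m - j).factorial * (k + j).factorial) * j.factorial
      = (m.choose j * j.factorial * (m - j).factorial) * (k + j).factorial := by ring
    _ = m.factorial * (k + j).factorial := by rw [h1]
    _ = m.factorial * ((k + j).choose k * k.factorial * j.factorial) := by rw [h2]
    _ = m.factorial * (k.factorial * (k + j).choose k) * j.factorial := by ring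

lemma psi_nat_sum (k m : ℕ) :
    (k + 1) * ∑ j ∈ Finset.range (m + 1),
        m.choose j * ((m - j).factorial * (k + j).factorial) =
      (m + k + 1).factorial := by
  have : ∑ j ∈ Finset.range (m + 1),
      m.choose j * ((m - j).factorial * (k + j).factorial) =
      m.factorial * k.factorial * (m + k + 1).choose (k + 1) := by
    rw [← Nat.sum_range_add_choose m k, Finset.mul_sum]
    refine Finset.sum_congr rfl fun j hj => ?_
    rw [psi_term_eq k m j (Nat.lt_succ_iff.mp (Finset.mem_range.mp hj))]
    rw [Nat.add_comm j k]
    ring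
  rw [this]
  have hle : k + 1 ≤ m + k + 1 := by omega
  have h := Nat.choose_mul_factorial_mul_factorial hle
  have hsub : m + k + 1 - (k + 1) = m := by omega
  rw [hsub] at h
  calc (k + 1) * (m.factorial * k.factorial * (m + k + 1).choose (k + 1))
      = (m + k + 1).choose (k + 1) * ((k + 1) * k.factorial) * m.factorial := by ring
    _ = (m + k + 1).choose (k + 1) * (k + 1).factorial * m.factorial := by
        rw [Nat.factorial_succ]
    _ = (m + k + 1).factorial := h

/-- For a finite set `W` with `n` elements (here the universe of the finite
type `ι`) and a non-empty subset `A ⊆ W` with `#A = k`, the sum over all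
subsets `C` of `W` containing `A` of the rational numbers
`(n − #C)!(#C − 1)!/n!` equals `1/k = 1/#A`. -/
theorem sum_psi_SSI_principal_filter
    {ι : Type*} [Fintype ι] [DecidableEq ι]
    (A : Finset ι) (hA : A.Nonempty) :
    (∑ C ∈ (Finset.univ : Finset ι).powerset.filter (fun C => A ⊆ C),
        ((Nat.factorial (Fintype.card ι - C.card) *
          Nat.factorial (C.card - 1) : ℚ) /
          Nat.factorial (Fintype.card ι))) = 1 / A.card := by
  classical
  set n := Fintype.card ι with hn
  obtain ⟨k, hk⟩ : ∃ k, A.card = k + 1 :=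
    ⟨A.card - 1, (Nat.succ_pred_eq_of_pos (Finset.card_pos.mpr hA)).symm⟩
  set m := Aᶜ.card with hm
  have hnm : n = m + k + 1 := by
    have := Finset.card_add_card_compl A
    omega
  -- Step 1: reindex over subsets of Aᶜ
  have step1 : (∑ C ∈ (Finset.univ : Finset ι).powerset.filter (fun C => A ⊆ C),
        ((Nat.factorial (n - C.card) * Nat.factorial (C.card - 1) : ℚ) /
          Nat.factorial n)) =
      ∑ B ∈ Aᶜ.powerset,
        ((Nat.factorial (n - (k + 1 + B.card)) *
          Nat.factorial (k + B.card) : ℚ) / Nat.factorial n) := by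
    refine Finset.sum_nbij' (fun C => C \ A) (fun B => A ∪ B) ?_ ?_ ?_ ?_ ?_
    · intro C hC
      simp only [Finset.mem_filter, Finset.mem_powerset] at hC
      simp only [Finset.mem_powerset]
      intro x hx
      simp only [Finset.mem_sdiff] at hx
      simp [hx.2]
    · intro B hB
      simp only [Finset.mem_powerset] at hB ⊢
      simp [Finset.mem_filter, Finset.subset_union_left]
    · intro C hC
      simp only [Finset.mem_filter, Finset.mem_powerset] at hC
      exact Finset.union_sdiff_of_subset hC.2
    · intro B hB
      simp only [Finset.mem_powerset] at hB
      have hdisj : Disjoint A B :=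
        Finset.disjoint_left.mpr fun x hxA hxB => by
          have := hB hxB; simp at this; exact this hxA
      show (A ∪ B) \ A = B
      exact Finset.union_sdiff_cancel_left hdisj
    · intro C hC
      simp only [Finset.mem_filter, Finset.mem_powerset] at hC
      have hcard : (C \ A).card = C.card - A.card := Finset.card_sdiff_of_subset hC.2
      have hAle : A.card ≤ C.card := Finset.card_le_card hC.2
      rw [hk] at hcard hAle
      have h1 : k + 1 + (C \ A).card = C.card := by omega
      have h2 : k + (C \ A).card = C.card - 1 := by omega
      show ((n - C.card).factorial * (C.card - 1).factorial : ℚ) / n.factorial =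
        ((n - (k + 1 + (C \ A).card)).factorial * (k + (C \ A).card).factorial : ℚ) / n.factorial
      rw [h1, h2]
  rw [step1]
  -- Step 2: sum over powerset by cardinality
  rw [Finset.sum_powerset]
  have step2 : ∀ j ∈ Finset.range (m + 1),
      (∑ B ∈ Finset.powersetCard j Aᶜ,
        ((Nat.factorial (n - (k + 1 + B.card)) *
          Nat.factorial (k + B.card) : ℚ) / Nat.factorial n)) =
      (m.choose j : ℚ) * ((Nat.factorial (m - j) *
          Nat.factorial (k + j) : ℚ) / Nat.factorial n) := by
    intro j hj
    rw [Finset.sum_congr rfl (fun B hB => ?_), Finset.sum_const,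
      Finset.card_powersetCard, ← hm, nsmul_eq_mul]
    have hB' := (Finset.mem_powersetCard.mp hB).2
    rw [hB']
    have hj' : j ≤ m := Nat.lt_succ_iff.mp (Finset.mem_range.mp hj)
    have hnj : n - (k + 1 + j) = m - j := by omega
    rw [hnj]
  rw [Finset.sum_congr rfl step2]
  -- Step 3: the numeric identity
  have hnat := psi_nat_sum k m
  have hnfac : (Nat.factorial n : ℚ) ≠ 0 := Nat.cast_ne_zero.mpr (Nat.factorial_ne_zero n)
  have hkq : ((k : ℚ) + 1) ≠ 0 := by positivity
  rw [hk]
  push_cast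
  have : ∑ j ∈ Finset.range (m + 1),
      (m.choose j : ℚ) * ((m - j).factorial * (k + j).factorial) =
      (Nat.factorial n : ℚ) / (k + 1) := by
    have : ((k + 1 : ℕ) : ℚ) * ∑ j ∈ Finset.range (m + 1),
        ((m.choose j * ((m - j).factorial * (k + j).factorial) : ℕ) : ℚ) =
        ((m + k + 1).factorial : ℚ) := by
      rw [← Nat.cast_sum, ← Nat.cast_mul, hnat]
    push_cast at this
    rw [eq_div_iff hkq]
    rw [hnm]
    push_cast
    linarith [this]
  rw [Finset.sum_congr rfl (fun j _ => by push_cast; ring :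
      ∀ j ∈ Finset.range (m + 1), ((m.choose j : ℚ) *
        ((Nat.factorial (m - j) * Nat.factorial (k + j) : ℚ) / Nat.factorial n)) =
        ((m.choose j : ℚ) * ((m - j).factorial * (k + j).factorial)) / Nat.factorial n),
    ← Finset.sum_div, this, div_div]
  rw [mul_comm ((k:ℚ) + 1) _, ← div_div, div_self hnfac]
end
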